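/- Let Γ be a finite directed graph containing an edge a that is a directed circuit of length one (a loop), let m ≥ 1, and let L = L_{a^m,d} be the corresponding closed inverse subsemigroup of cycle type in S(Γ). Suppose that, apart from powers of the loop a, there are no other directed circuits in Γ attached to (accessible from) a vertex of d. Then L has finite index in S(Γ), and [S(Γ):L] = (m−1)·N^Γ_{b,a} + Σ_{v ∈ V(d)} N^{Γ∖{a}}_{v,d}, where b is the vertex of the loop a, N^Γ_{b,a} is the number of directed paths in Γ with initial vertex b whose first edge is not a, and for each vertex v of d, N^{Γ∖{a}}_{v,d} is the number of directed paths in the graph Γ with the edge a deleted whose initial vertex is v and whose first edge is not an edge of d. -/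

import Mathlib

/-!
Every coset `↑(L t)` of `L = L_{a^m,d}` contains exactly one representative of one of two
kinds: `(a^j d, w)` with `1 ≤ j < m` and `w` a path from `b` not starting with `a`, or
`(d_n, w)` with `d_n` the suffix of `d` after its first `n` edges and `w` a path from the
`n`-th vertex of `d` avoiding `a` and not starting with an edge of `d`.

To reach a representative, strip the initial powers of `a` off `w` (only their number modulo
`m` matters), and if the resulting exponent is `0`, strip off the longest common prefix of `w`
with `d`. Uniqueness follows by comparing edge lists in `x t ≤ t'` for `x ∈ L`. By the
circuit hypothesis a walk from `b` that does not start with `a` never uses `a`, and walks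
from `d` avoiding `a` never repeat a vertex, so both kinds of representatives form finite
sets whose sizes are the two terms of the formula.
-/

/-- A (finite) directed graph: vertices, edges, and source/target maps. -/
structure DGraph where
  V : Type
  E : Type
  src : E → V
  tgt : E → V

namespace DGraph

/-- The vertex reached after traversing a list of edges from a vertex. -/
def walkEnd (G : DGraph) : G.V → List G.E → G.V
  | v, [] => v
  | _, e :: l => walkEnd G (G.tgt e) l

/-- The list of edges forms a directed walk starting at the given vertex. -/
def IsWalk (G : DGraph) : G.V → List G.E → Prop
  | _, [] => True
  | v, e :: l => G.src e = v ∧ IsWalk G (G.tgt e) l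

variable (G : DGraph)

@[simp] theorem walkEnd_nil (v : G.V) : G.walkEnd v [] = v := rfl
@[simp] theorem walkEnd_cons (v : G.V) (e : G.E) (l : List G.E) :
    G.walkEnd v (e :: l) = G.walkEnd (G.tgt e) l := rfl
@[simp] theorem isWalk_nil (v : G.V) : G.IsWalk v [] := trivial
@[simp] theorem isWalk_cons (v : G.V) (e : G.E) (l : List G.E) :
    G.IsWalk v (e :: l) ↔ G.src e = v ∧ G.IsWalk (G.tgt e) l := Iff.rfl

theorem isWalk_append (v : G.V) (l1 l2 : List G.E) :
    G.IsWalk v (l1 ++ l2) ↔ G.IsWalk v l1 ∧ G.IsWalk (G.walkEnd v l1) l2 := by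
  induction l1 generalizing v with
  | nil => simp [IsWalk, walkEnd]
  | cons e l ih => simp [IsWalk, walkEnd, ih, and_assoc]

/-- A directed path in `G`: an initial vertex together with a compatible
list of edges, traversed in order (empty paths are allowed). -/
structure DPath (G : DGraph) where
  first : G.V
  edges : List G.E
  wf : G.IsWalk first edges

namespace DPath

variable {G}

/-- The terminal vertex of a directed path. -/
def last (p : G.DPath) : G.V := G.walkEnd p.first p.edges

/-- The list of vertices lying on a directed path. -/
def vertexList (p : G.DPath) : List G.V := p.first :: p.edges.map G.tgt

/-- `q` is a suffix (terminal segment) of `p`: `p = l ⬝ q` for some edge list `l`. -/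
def IsSuffixOf (q p : G.DPath) : Prop :=
  ∃ l : List G.E, p.edges = l ++ q.edges ∧ q.first = G.walkEnd p.first l

end DPath

theorem isWalk_chopAppend {u v w : G.DPath} (hs : v.IsSuffixOf u) (hvw : v.first = w.first) :
    G.IsWalk u.first (u.edges.take (u.edges.length - v.edges.length) ++ w.edges) := by
  obtain ⟨l, hl, hfst⟩ := hs
  rw [hl]
  have hlen : (l ++ v.edges).length - v.edges.length = l.length := by simp
  rw [hlen, List.take_left, G.isWalk_append]
  have hu := u.wf
  rw [hl, G.isWalk_append] at hu
  refine ⟨hu.1, ?_⟩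
  rw [← hfst, hvw]
  exact w.wf

theorem isWalk_concat {p q : G.DPath} (h : q.first = p.last) :
    G.IsWalk p.first (p.edges ++ q.edges) := by
  rw [G.isWalk_append]
  refine ⟨p.wf, ?_⟩
  show G.IsWalk p.last q.edges
  rw [← h]
  exact q.wf

/-- Concatenation of composable directed paths. -/
def concatPath (p q : G.DPath) (h : q.first = p.last) : G.DPath :=
  ⟨p.first, p.edges ++ q.edges, G.isWalk_concat h⟩

theorem isWalk_replicate (a : G.E) (h : G.tgt a = G.src a) (m : ℕ) :
    G.IsWalk (G.src a) (List.replicate m a) := by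
  induction m with
  | zero => trivial
  | succ n ih => rw [List.replicate_succ, G.isWalk_cons]; exact ⟨rfl, by rw [h]; exact ih⟩

/-- The path traversing a loop `a` exactly `m` times. -/
def loopPow (a : G.E) (h : G.tgt a = G.src a) (m : ℕ) : G.DPath :=
  ⟨G.src a, List.replicate m a, G.isWalk_replicate a h m⟩

/-- `p` is a nonempty directed circuit. -/
def IsCircuit (p : G.DPath) : Prop := p.edges ≠ [] ∧ p.last = p.first

/-- `p` and `d` share no nontrivial common prefix (initial segment). -/
def NoCommonPrefix (p d : G.DPath) : Prop :=
  ∀ l : List G.E, l ≠ [] → l <+: p.edges → ¬ l <+: d.edges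

end DGraph

/-- The underlying set of the graph inverse semigroup `S(Γ)`: pairs of directed
paths with the same initial vertex, together with a zero element. -/
inductive GIS (G : DGraph) where
  | zero : GIS G
  | pair (a b : G.DPath) (h : a.first = b.first) : GIS G

namespace GIS

open scoped Classical in
/-- The multiplication of the graph inverse semigroup:
`(t,u)(v,w) = (t,pw)` if `u = pv`, `(pt,w)` if `v = pu`, and `0` otherwise. -/
noncomputable def mul {G : DGraph} : GIS G → GIS G → GIS G
  | .zero, _ => .zero
  | .pair _ _ _, .zero => .zero
  | .pair t u h1, .pair v w h2 =>
    if hs : v.IsSuffixOf u then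
      .pair t ⟨t.first, u.edges.take (u.edges.length - v.edges.length) ++ w.edges,
        by rw [h1]; exact G.isWalk_chopAppend hs h2⟩ rfl
    else if hs' : u.IsSuffixOf v then
      .pair ⟨v.first, v.edges.take (v.edges.length - u.edges.length) ++ t.edges,
        G.isWalk_chopAppend hs' h1.symm⟩ w h2
    else .zero

noncomputable instance {G : DGraph} : Mul (GIS G) := ⟨GIS.mul⟩

/-- The inverse: `(v,w)⁻¹ = (w,v)` and `0⁻¹ = 0`. -/
def inv {G : DGraph} : GIS G → GIS G
  | .zero => .zero
  | .pair a b h => .pair b a h.symm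

/-- The natural partial order: `x ≤ y` iff `x = e * y` for some idempotent `e`. -/
def le {G : DGraph} (x y : GIS G) : Prop := ∃ e : GIS G, e * e = e ∧ x = e * y

end GIS

/-- `L` is a closed inverse subsemigroup of `S(Γ)`: a nonempty subset closed under
multiplication, inverses, and upward closed in the natural partial order. -/
def IsCISS (G : DGraph) (L : Set (GIS G)) : Prop :=
  L.Nonempty ∧ (∀ a ∈ L, ∀ b ∈ L, a * b ∈ L) ∧ (∀ a ∈ L, a.inv ∈ L) ∧
    (∀ a ∈ L, ∀ s : GIS G, GIS.le a s → s ∈ L)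

/-- The closed inverse subsemigroup `↑{(u,u)}` of (finite) chain type:
all `(q,q)` with `q` a suffix of `u`. -/
def chainSet (G : DGraph) (u : G.DPath) : Set (GIS G) :=
  {x | ∃ q : G.DPath, q.IsSuffixOf u ∧ x = GIS.pair q q rfl}

/-- The edge list of the `r`-th power of the path `p`. -/
def powEdges {G : DGraph} (p : G.DPath) (r : ℕ) : List G.E :=
  (List.replicate r p.edges).flatten

/-- The closed inverse subsemigroup of cycle type
`L_{p,d} = {(v p^r d, v p^s d) : r,s ≥ 0, v a suffix of p} ∪ {(q,q) : q a suffix of d}`. -/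
def cycleSet (G : DGraph) (p d : G.DPath) : Set (GIS G) :=
  {x | (∃ (r s : ℕ) (v a b : G.DPath) (h : a.first = b.first),
          v.IsSuffixOf p ∧ x = GIS.pair a b h ∧
          a.first = v.first ∧ a.edges = v.edges ++ powEdges p r ++ d.edges ∧
          b.first = v.first ∧ b.edges = v.edges ++ powEdges p s ++ d.edges) ∨
       (∃ q : G.DPath, q.IsSuffixOf d ∧ x = GIS.pair q q rfl)}

/-- `L` is a chain of idempotents: all elements are idempotent and any two are
comparable in the natural partial order. -/
def IsChainOfIdem (G : DGraph) (L : Set (GIS G)) : Prop :=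
  (∀ x ∈ L, x * x = x) ∧ ∀ x ∈ L, ∀ y ∈ L, GIS.le x y ∨ GIS.le y x

/-- The set of right cosets `↑(Lt)` (for `t` with `t t⁻¹ ∈ L`) of a closed inverse
subsemigroup `L`. -/
def cosets (G : DGraph) (L : Set (GIS G)) : Set (Set (GIS G)) :=
  {C | ∃ t : GIS G, t * t.inv ∈ L ∧ C = {s | ∃ x ∈ L, GIS.le (x * t) s}}

/-- `H` and `K` are conjugate: for some `s`, `s⁻¹Hs ⊆ K` and `sKs⁻¹ ⊆ H`. -/
def Conjugate (G : DGraph) (H K : Set (GIS G)) : Prop :=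
  ∃ s : GIS G, (∀ h ∈ H, s.inv * h * s ∈ K) ∧ (∀ k ∈ K, s * k * s.inv ∈ H)

/-- The set of directed paths with initial vertex `v` whose first edge (if any)
is not an edge of `w`. -/
def Npaths (G : DGraph) (v : G.V) (w : G.DPath) : Set G.DPath :=
  {t | t.first = v ∧ ∀ e, t.edges.head? = some e → e ∉ w.edges}


namespace List

variable {α : Type*}

theorem exists_maximal_replicate_prefix (a : α) (l : List α) :
    ∃ k r, l = replicate k a ++ r ∧ ∀ e, r.head? = some e → e ≠ a := by
  induction l with
  | nil => exact ⟨0, [], rfl, by simp⟩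
  | cons x l ih =>
    by_cases hx : x = a
    · obtain ⟨k, r, rfl, hr⟩ := ih
      exact ⟨k + 1, r, by simp [hx, replicate_succ], hr⟩
    · refine ⟨0, x :: l, rfl, fun e he => ?_⟩
      simp only [head?_cons, Option.some.injEq] at he
      exact he ▸ hx

theorem exists_maximal_take_prefix (l p : List α) :
    ∃ n ≤ l.length, ∃ r, p = l.take n ++ r ∧ ∀ h : n < l.length, r.head? ≠ some l[n] := by
  induction l generalizing p with
  | nil => exact ⟨0, le_rfl, p, rfl, fun h => absurd h (by simp)⟩
  | cons x l ih =>
    rcases p with _ | ⟨y, p⟩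
    · exact ⟨0, by simp, [], rfl, by simp⟩
    by_cases hxy : y = x
    · obtain ⟨n, hn, r, rfl, hr⟩ := ih p
      refine ⟨n + 1, by simpa using hn, r, by simp [hxy], fun h => ?_⟩
      simpa using hr (by simpa using h)
    · exact ⟨0, by simp, y :: p, rfl, by simpa using hxy⟩

theorem take_append_inj_of_head_notMem {l₀ l l' : List α} {u u' : ℕ}
    (hu : u ≤ l₀.length) (hu' : u' ≤ l₀.length) (h : l₀.take u ++ l = l₀.take u' ++ l')
    (hl : ∀ e, l.head? = some e → e ∉ l₀) (hl' : ∀ e, l'.head? = some e → e ∉ l₀) :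
    u = u' ∧ l = l' := by
  suffices huu : u = u' by subst huu; exact ⟨rfl, append_cancel_left h⟩
  -- a strictly longer common prefix would make the head of the shorter tail an element of `l₀`
  have key : ∀ {u u' l l'}, u < u' → u' ≤ l₀.length → l₀.take u ++ l = l₀.take u' ++ l' →
      (∀ e, l.head? = some e → e ∉ l₀) → False := by
    intro u u' l l' hlt hu' h hl
    rw [show u' = u + (u' - u - 1 + 1) by omega, take_add, append_assoc] at h
    have hu : u < l₀.length := by omega
    rw [append_cancel_left h, drop_eq_getElem_cons hu, take_succ_cons] at hl
    exact hl _ rfl (getElem_mem hu)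
  rcases Nat.lt_trichotomy u u' with hlt | heq | hlt
  · exact (key hlt hu' h hl).elim
  · exact heq
  · exact (key hlt hu h.symm hl').elim

theorem replicate_append_inj_of_head_ne {a : α} {c c' : ℕ} {l l' : List α}
    (h : replicate c a ++ l = replicate c' a ++ l')
    (hl : ∀ e, l.head? = some e → e ≠ a) (hl' : ∀ e, l'.head? = some e → e ≠ a) :
    c = c' ∧ l = l' := by
  have hN : ∀ k ≤ c + c' + 1, (replicate (c + c' + 1) a).take k = replicate k a := fun k hk => by
    simp [take_replicate, Nat.min_eq_left hk]
  refine take_append_inj_of_head_notMem (l₀ := replicate (c + c' + 1) a) (by simp; omega)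
    (by simp; omega) (by rwa [hN c (by omega), hN c' (by omega)]) ?_ ?_
  · exact fun e he hmem => hl e he (eq_of_mem_replicate hmem)
  · exact fun e he hmem => hl' e he (eq_of_mem_replicate hmem)

theorem forall_head?_ne_of_notMem {a : α} {l : List α} (h : a ∉ l) :
    ∀ e, l.head? = some e → e ≠ a :=
  fun _ he hea => h (hea ▸ mem_of_mem_head? he)

end List

namespace DGraph

variable {G : DGraph}

theorem DPath.ext {p q : G.DPath} (h₁ : p.first = q.first) (h₂ : p.edges = q.edges) : p = q := by
  cases p; cases q; simp_all

theorem walkEnd_append (v : G.V) (l₁ l₂ : List G.E) :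
    G.walkEnd v (l₁ ++ l₂) = G.walkEnd (G.walkEnd v l₁) l₂ := by
  induction l₁ generalizing v with
  | nil => rfl
  | cons e l ih => exact ih _

theorem walkEnd_replicate {a : G.E} (ha : G.tgt a = G.src a) (k : ℕ) :
    G.walkEnd (G.src a) (List.replicate k a) = G.src a := by
  induction k with
  | zero => rfl
  | succ k ih => rw [List.replicate_succ, walkEnd_cons, ha, ih]

theorem walkEnd_take_succ (v : G.V) {l : List G.E} {n : ℕ} (hn : n < l.length) :
    G.walkEnd v (l.take (n + 1)) = G.tgt l[n] := by
  rw [← List.take_append_getElem hn, walkEnd_append]; rfl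

theorem IsWalk.take {v : G.V} {l : List G.E} (h : G.IsWalk v l) (n : ℕ) :
    G.IsWalk v (l.take n) :=
  ((G.isWalk_append v _ _).mp (by rwa [List.take_append_drop])).1

theorem IsWalk.drop {v : G.V} {l : List G.E} (h : G.IsWalk v l) (n : ℕ) :
    G.IsWalk (G.walkEnd v (l.take n)) (l.drop n) :=
  ((G.isWalk_append v _ _).mp (by rwa [List.take_append_drop])).2

theorem IsWalk.src_getElem {v : G.V} {l : List G.E} (h : G.IsWalk v l) {n : ℕ}
    (hn : n < l.length) : G.src l[n] = G.walkEnd v (l.take n) := by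
  induction l generalizing v n with
  | nil => simp at hn
  | cons e t ih =>
    rcases n with _ | n
    · exact h.1
    · simpa using ih h.2 (by simpa using hn)

namespace DPath

def vertexAt (p : G.DPath) (n : ℕ) : G.V := G.walkEnd p.first (p.edges.take n)

theorem first_mem_vertexList (p : G.DPath) : p.first ∈ p.vertexList := List.mem_cons_self

theorem length_vertexList (p : G.DPath) : p.vertexList.length = p.edges.length + 1 := by
  simp [vertexList]

theorem getElem_vertexList (p : G.DPath) {n : ℕ} (hn : n < p.vertexList.length) :
    p.vertexList[n] = p.vertexAt n := by
  rcases n with _ | n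
  · rfl
  · simp only [vertexList, List.getElem_cons_succ, List.getElem_map]
    exact (walkEnd_take_succ _ _).symm

theorem mem_vertexList_iff {p : G.DPath} {v : G.V} :
    v ∈ p.vertexList ↔ ∃ n ≤ p.edges.length, p.vertexAt n = v := by
  simp only [List.mem_iff_getElem, getElem_vertexList, length_vertexList, Nat.lt_succ_iff]
  exact ⟨fun ⟨n, hn, h⟩ => ⟨n, hn, h⟩, fun ⟨n, hn, h⟩ => ⟨n, hn, h⟩⟩

theorem vertexAt_injOn {p : G.DPath} (hp : p.vertexList.Nodup) {i j : ℕ}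
    (hi : i ≤ p.edges.length) (hj : j ≤ p.edges.length) (h : p.vertexAt i = p.vertexAt j) :
    i = j := by
  have hlen := p.length_vertexList
  rw [← getElem_vertexList p (by omega), ← getElem_vertexList p (by omega)] at h
  exact (hp.getElem_inj_iff).mp h

theorem nodup_vertexList_of_vertexAt_ne {p : G.DPath}
    (h : ∀ i j, i < j → j ≤ p.edges.length → p.vertexAt i ≠ p.vertexAt j) :
    p.vertexList.Nodup := by
  refine List.pairwise_iff_getElem.mpr fun i j hi hj hij => ?_
  rw [getElem_vertexList, getElem_vertexList]
  exact h i j hij (by rw [length_vertexList] at hj; omega)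

theorem IsSuffixOf.refl (p : G.DPath) : p.IsSuffixOf p := ⟨[], by simp, rfl⟩

theorem IsSuffixOf.eq_of_length_le {p q : G.DPath} (h : q.IsSuffixOf p)
    (hl : p.edges.length ≤ q.edges.length) : q = p := by
  obtain ⟨l, hl', hf⟩ := h
  have hlen := congrArg List.length hl'
  simp only [List.length_append] at hlen
  obtain rfl : l = [] := List.eq_nil_of_length_eq_zero (by omega)
  exact ext hf (by simpa using hl'.symm)

abbrev drop (p : G.DPath) (n : ℕ) : G.DPath := ⟨p.vertexAt n, p.edges.drop n, p.wf.drop n⟩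

abbrev takeAppend (p : G.DPath) (n : ℕ) (w : G.DPath) (h : p.vertexAt n = w.first) : G.DPath :=
  ⟨p.first, p.edges.take n ++ w.edges,
    (G.isWalk_append _ _ _).mpr ⟨p.wf.take n, by rw [← vertexAt, h]; exact w.wf⟩⟩

theorem drop_first (p : G.DPath) (n : ℕ) : (p.drop n).first = p.vertexAt n := rfl

theorem drop_edges (p : G.DPath) (n : ℕ) : (p.drop n).edges = p.edges.drop n := rfl

theorem vertexAt_drop (p : G.DPath) (i j : ℕ) : (p.drop i).vertexAt j = p.vertexAt (i + j) := by
  simp only [vertexAt, List.take_add, walkEnd_append]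

theorem drop_add_isSuffixOf_drop (p : G.DPath) (i k : ℕ) :
    (p.drop (i + k)).IsSuffixOf (p.drop i) :=
  ⟨(p.edges.drop i).take k,
    by rw [drop_edges, drop_edges, ← List.drop_drop, List.take_append_drop],
    (vertexAt_drop p i k).symm⟩

end DPath

/-- The path `a^k w`. -/
abbrev loopThen (a : G.E) (ha : G.tgt a = G.src a) (k : ℕ) (w : G.DPath)
    (hw : w.first = G.src a) : G.DPath :=
  ⟨G.src a, List.replicate k a ++ w.edges, (G.isWalk_append _ _ _).mpr
    ⟨G.isWalk_replicate a ha k, by rw [walkEnd_replicate ha, ← hw]; exact w.wf⟩⟩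

section loopThen

variable {a : G.E} {ha : G.tgt a = G.src a}

theorem loopThen_edges (k : ℕ) (w : G.DPath) (hw) :
    (loopThen a ha k w hw).edges = List.replicate k a ++ w.edges := rfl

theorem loopThen_zero (w : G.DPath) (hw) : loopThen a ha 0 w hw = w := DPath.ext hw.symm rfl

theorem drop_isSuffixOf_loopThen (k n : ℕ) (w : G.DPath) (hw) :
    (w.drop n).IsSuffixOf (loopThen a ha k w hw) :=
  ⟨List.replicate k a ++ w.edges.take n, by simp,
    by simp [DPath.vertexAt, walkEnd_append, walkEnd_replicate ha, hw]⟩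

end loopThen

end DGraph

namespace GIS

open DGraph

variable {G : DGraph}

theorem pair_eq_pair {u u' w w' : G.DPath} {h : u.first = w.first}
    {h' : u'.first = w'.first} :
    pair u w h = pair u' w' h' ↔ u = u' ∧ w = w' :=
  ⟨fun he => by injection he with h₁ h₂; exact ⟨h₁, h₂⟩, by rintro ⟨rfl, rfl⟩; rfl⟩

theorem pair_mul_pair_of_isSuffixOf {t u v w s : G.DPath} {h₁ : t.first = u.first}
    {h₂ : v.first = w.first} {hs : t.first = s.first} (z : List G.E)
    (hu : u.edges = z ++ v.edges) (hv : v.first = G.walkEnd u.first z)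
    (hse : s.edges = z ++ w.edges) :
    pair t u h₁ * pair v w h₂ = pair t s hs := by
  show mul _ _ = _
  simp only [mul]
  rw [dif_pos ⟨z, hu, hv⟩, pair_eq_pair]
  refine ⟨rfl, DPath.ext hs ?_⟩
  simp [hu, hse]

theorem pair_mul_pair_of_isSuffixOf' {t u v w s : G.DPath} {h₁ : t.first = u.first}
    {h₂ : v.first = w.first} {hs : s.first = w.first} (z : List G.E) (hz : z ≠ [])
    (hv : v.edges = z ++ u.edges) (hu : u.first = G.walkEnd v.first z)
    (hsf : s.first = v.first) (hse : s.edges = z ++ t.edges) :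
    pair t u h₁ * pair v w h₂ = pair s w hs := by
  have hlen : u.edges.length < v.edges.length := by
    simpa [hv] using List.length_pos_iff.mpr hz
  show mul _ _ = _
  simp only [mul]
  rw [dif_neg fun h => (h.eq_of_length_le hlen.le ▸ hlen).false, dif_pos ⟨z, hv, hu⟩,
    pair_eq_pair]
  refine ⟨DPath.ext hsf.symm ?_, rfl⟩
  simp [hv, hse]

theorem pair_self_mul {y v w : G.DPath} {h : v.first = w.first} (hy : y.IsSuffixOf v) :
    pair y y rfl * pair v w h = pair v w h := by
  obtain ⟨z, hz, hf⟩ := hy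
  rcases eq_or_ne z [] with rfl | hne
  · obtain rfl : y = v := DPath.ext hf (by simpa using hz.symm)
    exact pair_mul_pair_of_isSuffixOf [] (by simp) rfl (by simp)
  · exact pair_mul_pair_of_isSuffixOf' z hne hz hf rfl hz

theorem pair_mul_inv (u w : G.DPath) (h : u.first = w.first) :
    pair u w h * (pair u w h).inv = pair u u rfl :=
  pair_mul_pair_of_isSuffixOf [] (by simp) rfl (by simp)

theorem eq_zero_or_eq_pair_self_of_mul_self {e : GIS G} (he : e * e = e) :
    e = zero ∨ ∃ y : G.DPath, e = pair y y rfl := by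
  rcases e with _ | ⟨y, y', h⟩
  · exact Or.inl rfl
  refine Or.inr ⟨y, ?_⟩
  obtain rfl : y = y' := by
    change mul _ _ = _ at he
    simp only [mul] at he
    split_ifs at he with hs hs'
    · have hlen := congrArg (·.edges.length) (pair_eq_pair.mp he).2
      simp only [List.length_append, List.length_take] at hlen
      exact hs.eq_of_length_le (by omega)
    · have hlen := congrArg (·.edges.length) (pair_eq_pair.mp he).1
      simp only [List.length_append, List.length_take] at hlen
      exact (hs'.eq_of_length_le (by omega)).symm
  rfl

theorem zero_le (s : GIS G) : le zero s := ⟨zero, rfl, rfl⟩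

theorem eq_zero_of_le_zero {x : GIS G} (h : le x zero) : x = zero := by
  obtain ⟨e, -, rfl⟩ := h
  cases e <;> rfl

theorem pair_le_pair_iff {c w c' w' : G.DPath} {h : c.first = w.first}
    {h' : c'.first = w'.first} :
    le (pair c w h) (pair c' w' h') ↔
      ∃ z, c.edges = z ++ c'.edges ∧ w.edges = z ++ w'.edges ∧ c'.first = G.walkEnd c.first z := by
  constructor
  · rintro ⟨e, he, hx⟩
    rcases eq_zero_or_eq_pair_self_of_mul_self he with rfl | ⟨y, rfl⟩
    · cases hx
    change _ = mul _ _ at hx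
    simp only [mul] at hx
    split_ifs at hx with hs hs'
    · obtain ⟨rfl, rfl⟩ := pair_eq_pair.mp hx
      obtain ⟨z, hz, hf⟩ := hs
      exact ⟨z, hz, by simp [hz], hf⟩
    · obtain ⟨rfl, rfl⟩ := pair_eq_pair.mp hx
      obtain ⟨z, hz, hf⟩ := hs'
      exact ⟨[], by simp [hz], rfl, rfl⟩
  · rintro ⟨z, hc, hw, hf⟩
    exact ⟨pair c c rfl, pair_self_mul (DPath.IsSuffixOf.refl c),
      (pair_mul_pair_of_isSuffixOf z hc hf hw).symm⟩

theorem le.refl (x : GIS G) : le x x := by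
  rcases x with _ | ⟨u, w, h⟩
  · exact zero_le _
  · exact pair_le_pair_iff.mpr ⟨[], rfl, rfl, rfl⟩

theorem le.trans {x y z : GIS G} (hxy : le x y) (hyz : le y z) : le x z := by
  rcases z with _ | ⟨c'', w'', h''⟩
  · obtain rfl := eq_zero_of_le_zero hyz
    obtain rfl := eq_zero_of_le_zero hxy
    exact zero_le _
  rcases y with _ | ⟨c', w', h'⟩
  · rw [eq_zero_of_le_zero hxy]
    exact zero_le _
  rcases x with _ | ⟨c, w, h⟩
  · exact zero_le _
  obtain ⟨z₁, hc₁, hw₁, hf₁⟩ := pair_le_pair_iff.mp hxy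
  obtain ⟨z₂, hc₂, hw₂, hf₂⟩ := pair_le_pair_iff.mp hyz
  exact pair_le_pair_iff.mpr ⟨z₁ ++ z₂, by simp [hc₁, hc₂], by simp [hw₁, hw₂],
    by rw [walkEnd_append, ← hf₁, hf₂]⟩

/-- The coset `↑(L t)` of the definition of `cosets`. -/
def upCoset (L : Set (GIS G)) (t : GIS G) : Set (GIS G) := {s | ∃ x ∈ L, le (x * t) s}

theorem upCoset_subset_upCoset {L : Set (GIS G)} {t t' : GIS G}
    (H : ∀ x ∈ L, ∃ y ∈ L, le (y * t') (x * t)) : upCoset L t ⊆ upCoset L t' := by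
  rintro s ⟨x, hx, hle⟩
  obtain ⟨y, hy, hy'⟩ := H x hx
  exact ⟨y, hy, hy'.trans hle⟩

theorem mem_upCoset_self {L : Set (GIS G)} {u w : G.DPath} (h : u.first = w.first)
    (hu : pair u u rfl ∈ L) : pair u w h ∈ upCoset L (pair u w h) :=
  ⟨_, hu, by rw [pair_self_mul (DPath.IsSuffixOf.refl u)]; exact le.refl _⟩

open scoped Classical in
noncomputable def ofPaths (u w : G.DPath) : GIS G :=
  if h : u.first = w.first then pair u w h else zero

theorem ofPaths_eq {u w : G.DPath} (h : u.first = w.first) : ofPaths u w = pair u w h :=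
  dif_pos h

end GIS

namespace DGraph

variable {G : DGraph}

theorem exists_eq_loopThen {a : G.E} (ha : G.tgt a = G.src a) {w : G.DPath}
    (hw : w.first = G.src a) :
    ∃ k w₀ hw₀, (∀ e, w₀.edges.head? = some e → e ≠ a) ∧ w = loopThen a ha k w₀ hw₀ := by
  obtain ⟨k, r, hr, hhead⟩ := List.exists_maximal_replicate_prefix a w.edges
  have hwalk := w.wf
  rw [hw, hr, G.isWalk_append, walkEnd_replicate ha] at hwalk
  exact ⟨k, ⟨G.src a, r, hwalk.2⟩, rfl, hhead, DPath.ext hw hr⟩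

def NoOtherCircuitsFrom (a : G.E) (d : G.DPath) : Prop :=
  ∀ c : G.DPath, G.IsCircuit c →
    (∃ g : G.DPath, g.first ∈ d.vertexList ∧ g.last ∈ c.vertexList) → ∀ e ∈ c.edges, e = a

namespace NoOtherCircuitsFrom

variable {a : G.E} {d : G.DPath}

theorem eq_of_mem_closedWalk (h : NoOtherCircuitsFrom a d) {v₀ : G.V} (hv₀ : v₀ ∈ d.vertexList)
    {l₀ l : List G.E} (hl₀ : G.IsWalk v₀ l₀) (hl : G.IsWalk (G.walkEnd v₀ l₀) l)
    (hcl : G.walkEnd (G.walkEnd v₀ l₀) l = G.walkEnd v₀ l₀) : ∀ e ∈ l, e = a := by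
  rcases eq_or_ne l [] with rfl | hne
  · simp
  exact h ⟨_, l, hl⟩ ⟨hne, hcl⟩ ⟨⟨v₀, l₀, hl₀⟩, hv₀, List.mem_cons_self⟩

/-- If `a` occurred in `l`, the part of `l` before it would be a closed walk at `src a`,
hence made of `a`'s only; either way `l` would start with `a`. -/
theorem notMem_of_head_ne (h : NoOtherCircuitsFrom a d) (hb : G.src a ∈ d.vertexList)
    {l : List G.E} (hl : G.IsWalk (G.src a) l) (hhead : ∀ e, l.head? = some e → e ≠ a) :
    a ∉ l := by
  intro hmem
  obtain ⟨s, hs, hsa⟩ := List.getElem_of_mem hmem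
  have hcl : G.walkEnd (G.src a) (l.take s) = G.src a := by rw [← hl.src_getElem hs, hsa]
  have hpre := h.eq_of_mem_closedWalk hb (l₀ := []) trivial (hl.take s) hcl
  refine hhead l[0] (by simp [List.head?_eq_getElem?]) ?_
  rcases Nat.eq_zero_or_pos s with rfl | hs0
  · exact hsa
  · have h0 := List.getElem_mem (l := l.take s) (n := 0) (by simp; omega)
    rw [List.getElem_take] at h0
    exact hpre _ h0

theorem nodup_vertexList (h : NoOtherCircuitsFrom a d) {w : G.DPath}
    (hw : w.first ∈ d.vertexList) (ha : a ∉ w.edges) : w.vertexList.Nodup := by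
  refine DPath.nodup_vertexList_of_vertexAt_ne fun i j hij hj heq => ha ?_
  have hi : i < w.edges.length := by omega
  have hseg := h.eq_of_mem_closedWalk hw (w.wf.take i) ((w.wf.drop i).take (j - i))
    (by rw [← walkEnd_append, ← List.take_add, Nat.add_sub_cancel' hij.le]; exact heq.symm)
  have hmem : w.edges[i] ∈ (w.edges.drop i).take (j - i) := by
    rw [List.drop_eq_getElem_cons hi, show j - i = j - i - 1 + 1 by omega, List.take_succ_cons]
    exact List.mem_cons_self
  exact hseg _ hmem ▸ List.getElem_mem hi

end NoOtherCircuitsFrom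

theorem finite_setOf_nodup_vertexList [Fintype G.V] [Finite G.E] :
    {w : G.DPath | w.vertexList.Nodup}.Finite := by
  have hinj : Function.Injective fun w : G.DPath => (w.first, w.edges) :=
    fun w w' h => DPath.ext (congrArg Prod.fst h) (congrArg Prod.snd h)
  refine Set.Finite.of_finite_image ((Set.finite_univ.prod
    (List.finite_length_le G.E (Fintype.card G.V))).subset ?_) hinj.injOn
  rintro _ ⟨w, hw, rfl⟩
  have hlen := hw.length_le_card
  rw [DPath.length_vertexList] at hlen
  exact ⟨trivial, show w.edges.length ≤ _ by omega⟩

end DGraph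

namespace LoopCycle

open DGraph GIS

variable {G : DGraph} {a : G.E} {ha : G.tgt a = G.src a} {m : ℕ} {d : G.DPath}

theorem head_ne_of_noCommonPrefix (hm : 1 ≤ m) (hpre : G.NoCommonPrefix (G.loopPow a ha m) d) :
    ∀ e, d.edges.head? = some e → e ≠ a := by
  rintro e he rfl
  obtain ⟨t, ht⟩ := List.head?_eq_some_iff.mp he
  refine hpre [e] (by simp) ⟨List.replicate (m - 1) e, ?_⟩ ⟨t, ht.symm⟩
  show [e] ++ _ = List.replicate m e
  rw [List.singleton_append, ← List.replicate_succ, Nat.sub_add_cancel hm]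

theorem powEdges_loopPow (r : ℕ) : powEdges (G.loopPow a ha m) r = List.replicate (r * m) a :=
  List.flatten_replicate_replicate

variable (hd : d.first = G.src a)

theorem mem_cycleSet_loopPow_iff (hm : 1 ≤ m) {x : GIS G} :
    x ∈ cycleSet G (G.loopPow a ha m) d ↔
      (∃ i₁ i₂, i₁ ≡ i₂ [MOD m] ∧
        x = pair (loopThen a ha i₁ d hd) (loopThen a ha i₂ d hd) rfl) ∨
      ∃ n ≤ d.edges.length, x = pair (d.drop n) (d.drop n) rfl := by
  constructor
  · rintro (⟨r, s, v, c, c', h, ⟨l, hl, hf⟩, rfl, hc₁, hc₂, hc₁', hc₂'⟩ |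
      ⟨q, ⟨l, hl, hf⟩, rfl⟩)
    · obtain ⟨-, hl', hv⟩ := List.append_eq_replicate_iff.mp hl.symm
      have hvf : v.first = G.src a := by rw [hf, hl']; exact walkEnd_replicate ha _
      refine Or.inl ⟨v.edges.length + r * m, v.edges.length + s * m,
        by simp [Nat.ModEq, Nat.add_mul_mod_self_right], pair_eq_pair.mpr ⟨?_, ?_⟩⟩
      · refine DPath.ext (hc₁.trans hvf) ?_
        rw [hc₂, powEdges_loopPow, loopThen_edges, List.replicate_add, ← hv]
      · refine DPath.ext (hc₁'.trans hvf) ?_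
        rw [hc₂', powEdges_loopPow, loopThen_edges, List.replicate_add, ← hv]
    · have hlen : l.length ≤ d.edges.length := by rw [hl, List.length_append]; omega
      have hq : q = d.drop l.length :=
        DPath.ext (by rw [hf, DPath.drop_first, DPath.vertexAt, hl, List.take_left' rfl])
          (by rw [DPath.drop_edges, hl, List.drop_left' rfl])
      subst hq
      exact Or.inr ⟨l.length, hlen, rfl⟩
  · rintro (⟨i₁, i₂, hi, rfl⟩ | ⟨n, -, rfl⟩)
    · have hlt : i₁ % m < m := Nat.mod_lt _ hm
      refine Or.inl ⟨i₁ / m, i₂ / m, ⟨G.src a, List.replicate (i₁ % m) a,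
        G.isWalk_replicate a ha _⟩, loopThen a ha i₁ d hd, loopThen a ha i₂ d hd, rfl,
        ⟨List.replicate (m - i₁ % m) a, ?_, (walkEnd_replicate ha _).symm⟩, rfl, rfl, ?_, rfl, ?_⟩
      · show List.replicate m a = _
        rw [List.replicate_append_replicate, Nat.sub_add_cancel hlt.le]
      · rw [powEdges_loopPow, List.replicate_append_replicate, Nat.mod_add_div']
      · rw [powEdges_loopPow, show i₁ % m = i₂ % m from hi, List.replicate_append_replicate,
          Nat.mod_add_div']
    · exact Or.inr ⟨d.drop n, ⟨d.edges.take n, by simp, rfl⟩, rfl⟩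

theorem loopPair_mem (hm : 1 ≤ m) (i : ℕ) :
    pair (loopThen a ha i d hd) (loopThen a ha i d hd) rfl ∈ cycleSet G (G.loopPow a ha m) d :=
  (mem_cycleSet_loopPow_iff hd hm).mpr (Or.inl ⟨i, i, rfl, rfl⟩)

theorem dropPair_mem (n : ℕ) :
    pair (d.drop n) (d.drop n) rfl ∈ cycleSet G (G.loopPow a ha m) d :=
  Or.inr ⟨d.drop n, ⟨d.edges.take n, by simp, rfl⟩, rfl⟩

theorem loopPair_mul_loopThen_add (i₁ k i : ℕ) {w : G.DPath}
    (h : (loopThen a ha i d hd).first = w.first) :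
    pair (loopThen a ha i₁ d hd) (loopThen a ha (k + i) d hd) rfl *
        pair (loopThen a ha i d hd) w h =
      pair (loopThen a ha i₁ d hd) (loopThen a ha k w h.symm) rfl :=
  pair_mul_pair_of_isSuffixOf (List.replicate k a)
    (by simp only [List.replicate_add, List.append_assoc])
    (walkEnd_replicate ha _).symm rfl

theorem loopPair_mul_loopThen_add_succ (i₁ i₂ k : ℕ) {w : G.DPath}
    (h : (loopThen a ha (k + 1 + i₂) d hd).first = w.first) :
    pair (loopThen a ha i₁ d hd) (loopThen a ha i₂ d hd) rfl *
        pair (loopThen a ha (k + 1 + i₂) d hd) w h =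
      pair (loopThen a ha (k + 1 + i₁) d hd) w h :=
  pair_mul_pair_of_isSuffixOf' (List.replicate (k + 1) a) (by simp)
    (by simp only [List.replicate_add, List.append_assoc])
    (walkEnd_replicate ha _).symm rfl
    (by simp only [List.replicate_add, List.append_assoc])

theorem loopPair_mul_drop (i₁ i₂ n : ℕ) {w : G.DPath} (h : (d.drop n).first = w.first) :
    pair (loopThen a ha i₁ d hd) (loopThen a ha i₂ d hd) rfl * pair (d.drop n) w h =
      pair (loopThen a ha i₁ d hd) (loopThen a ha i₂ (d.takeAppend n w h) hd) rfl :=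
  pair_mul_pair_of_isSuffixOf (List.replicate i₂ a ++ d.edges.take n) (by simp)
    (by simp [DPath.vertexAt, walkEnd_append, walkEnd_replicate ha, hd]) (by simp)

theorem dropPair_mul_drop_add (n k : ℕ) {w : G.DPath} (h : (d.drop (n + k)).first = w.first) :
    pair (d.drop n) (d.drop n) rfl * pair (d.drop (n + k)) w h =
      pair (d.drop n) ((d.drop n).takeAppend k w (by rw [DPath.vertexAt_drop]; exact h)) rfl :=
  pair_mul_pair_of_isSuffixOf ((d.edges.drop n).take k)
    (by rw [DPath.drop_edges, DPath.drop_edges, ← List.drop_drop, List.take_append_drop])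
    (DPath.vertexAt_drop d n k).symm rfl

theorem exists_mul_loopThen_eq (hm : 1 ≤ m) {x : GIS G}
    (hx : x ∈ cycleSet G (G.loopPow a ha m) d) (i : ℕ) {w : G.DPath}
    (h : (loopThen a ha i d hd).first = w.first) :
    ∃ I k, I ≡ k + i [MOD m] ∧
      x * pair (loopThen a ha i d hd) w h =
        pair (loopThen a ha I d hd) (loopThen a ha k w h.symm) rfl := by
  rcases (mem_cycleSet_loopPow_iff hd hm).mp hx with ⟨i₁, i₂, hi, rfl⟩ | ⟨n, -, rfl⟩
  · rcases le_or_gt i i₂ with hle | hlt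
    · obtain ⟨k, rfl⟩ : ∃ k, i₂ = k + i := ⟨i₂ - i, by omega⟩
      exact ⟨i₁, k, hi, loopPair_mul_loopThen_add hd i₁ k i h⟩
    · obtain ⟨k, rfl⟩ : ∃ k, i = k + 1 + i₂ := ⟨i - i₂ - 1, by omega⟩
      refine ⟨k + 1 + i₁, 0, by rw [zero_add]; exact hi.add_left _, ?_⟩
      rw [loopPair_mul_loopThen_add_succ]
      exact pair_eq_pair.mpr ⟨rfl, (loopThen_zero w _).symm⟩
  · refine ⟨i, 0, by rw [zero_add], ?_⟩
    rw [pair_self_mul (drop_isSuffixOf_loopThen i n d hd)]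
    exact pair_eq_pair.mpr ⟨rfl, (loopThen_zero w _).symm⟩

theorem upCoset_loopThen_subset (hm : 1 ≤ m) {i k i' k' : ℕ} {w : G.DPath}
    (hw : w.first = G.src a) (hcong : i + k' ≡ i' + k [MOD m]) :
    upCoset (cycleSet G (G.loopPow a ha m) d)
        (pair (loopThen a ha i d hd) (loopThen a ha k w hw) rfl) ⊆
      upCoset (cycleSet G (G.loopPow a ha m) d)
        (pair (loopThen a ha i' d hd) (loopThen a ha k' w hw) rfl) := by
  refine upCoset_subset_upCoset fun x hx => ?_
  obtain ⟨I, C, hIC, hx⟩ := exists_mul_loopThen_eq hd hm hx i (w := loopThen a ha k w hw) rfl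
  have hcong' : I + k' ≡ C + k + i' [MOD m] :=
    calc I + k' ≡ C + i + k' [MOD m] := hIC.add_right k'
      _ = C + (i + k') := by ring
      _ ≡ C + (i' + k) [MOD m] := hcong.add_left C
      _ = C + k + i' := by ring
  refine ⟨_, (mem_cycleSet_loopPow_iff hd hm).mpr (Or.inl ⟨_, _, hcong', rfl⟩), ?_⟩
  rw [hx, loopPair_mul_loopThen_add, pair_le_pair_iff]
  refine ⟨List.replicate k' a, ?_, ?_, (walkEnd_replicate ha k').symm⟩
  · simp only [← List.append_assoc, List.replicate_append_replicate, Nat.add_comm I]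
  · simp only [← List.append_assoc, List.replicate_append_replicate]
    congr 2
    omega

theorem upCoset_loopThen_eq (hm : 1 ≤ m) {i k i' k' : ℕ} {w : G.DPath}
    (hw : w.first = G.src a) (hcong : i + k' ≡ i' + k [MOD m]) :
    upCoset (cycleSet G (G.loopPow a ha m) d)
        (pair (loopThen a ha i d hd) (loopThen a ha k w hw) rfl) =
      upCoset (cycleSet G (G.loopPow a ha m) d)
        (pair (loopThen a ha i' d hd) (loopThen a ha k' w hw) rfl) :=
  (upCoset_loopThen_subset hd hm hw hcong).antisymm (upCoset_loopThen_subset hd hm hw hcong.symm)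

theorem upCoset_drop_eq (hm : 1 ≤ m) (n : ℕ) {w : G.DPath}
    (h : (d.drop n).first = w.first) :
    upCoset (cycleSet G (G.loopPow a ha m) d) (pair (d.drop n) w h) =
      upCoset (cycleSet G (G.loopPow a ha m) d)
        (pair (loopThen a ha 0 d hd) (d.takeAppend n w h) hd.symm) := by
  set T := d.takeAppend n w h
  have hloop : ∀ i₁ i₂, pair (loopThen a ha i₁ d hd) (loopThen a ha i₂ d hd) rfl *
      pair (d.drop n) w h =
        pair (loopThen a ha i₁ d hd) (loopThen a ha i₂ d hd) rfl *
          pair (loopThen a ha 0 d hd) T hd.symm := fun i₁ i₂ =>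
    (loopPair_mul_drop hd i₁ i₂ n h).trans (loopPair_mul_loopThen_add hd i₁ i₂ 0 _).symm
  have hT : pair (loopThen a ha 0 d hd) (loopThen a ha 0 d hd) rfl * pair (d.drop n) w h =
      pair (loopThen a ha 0 d hd) T hd.symm := by
    rw [hloop, pair_self_mul (DPath.IsSuffixOf.refl _)]
  have hdrop : ∀ n', pair (d.drop n') (d.drop n') rfl * pair (loopThen a ha 0 d hd) T hd.symm =
      pair (loopThen a ha 0 d hd) T hd.symm := fun n' =>
    pair_self_mul (drop_isSuffixOf_loopThen 0 n' d hd)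
  have hle : ∀ n', le (pair (loopThen a ha 0 d hd) T hd.symm)
      (pair (d.drop n') (d.drop n') rfl * pair (d.drop n) w h) := by
    intro n'
    rcases le_total n' n with hn' | hn'
    · obtain ⟨k, rfl⟩ := Nat.exists_eq_add_of_le hn'
      rw [dropPair_mul_drop_add, pair_le_pair_iff]
      exact ⟨d.edges.take n', by simp, by simp [T, List.take_add], by simp [DPath.vertexAt, hd]⟩
    · obtain ⟨k, rfl⟩ := Nat.exists_eq_add_of_le hn'
      rw [pair_self_mul (d.drop_add_isSuffixOf_drop n k), pair_le_pair_iff]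
      exact ⟨d.edges.take n, by simp, rfl, by simp [DPath.vertexAt, hd]⟩
  have h00 := loopPair_mem (ha := ha) (m := m) hd hm 0
  apply Set.Subset.antisymm
  · refine upCoset_subset_upCoset fun x hx => ?_
    rcases (mem_cycleSet_loopPow_iff hd hm).mp hx with ⟨i₁, i₂, -, rfl⟩ | ⟨n', -, rfl⟩
    · exact ⟨_, hx, by rw [hloop]; exact le.refl _⟩
    · exact ⟨_, h00, by rw [pair_self_mul (DPath.IsSuffixOf.refl _)]; exact hle n'⟩
  · refine upCoset_subset_upCoset fun x hx => ?_
    rcases (mem_cycleSet_loopPow_iff hd hm).mp hx with ⟨i₁, i₂, -, rfl⟩ | ⟨n', -, rfl⟩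
    · exact ⟨_, hx, by rw [hloop]; exact le.refl _⟩
    · exact ⟨_, h00, by rw [hT, hdrop]; exact le.refl _⟩

variable (a) in
/-- The paths counted by `N^Γ_{b,a}`. -/
def loopTails : Set G.DPath := {t | t.first = G.src a ∧ ∀ e, t.edges.head? = some e → e ≠ a}

variable (a d) in
/-- The paths counted by `N^{Γ∖{a}}_{v,d}`. -/
def pathTails (v : G.V) : Set G.DPath :=
  {t | a ∉ t.edges ∧ t.first = v ∧ ∀ e, t.edges.head? = some e → e ∉ d.edges}

variable (a ha m d) in
def loopReps : Set (GIS G) :=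
  (fun p : ℕ × G.DPath => ofPaths (loopThen a ha p.1 d hd) p.2) '' (Set.Ico 1 m ×ˢ loopTails a)

variable (a d) in
def pathReps : Set (GIS G) :=
  ⋃ n ∈ Set.Iic d.edges.length, ofPaths (d.drop n) '' pathTails a d (d.vertexAt n)

theorem mem_loopReps {r : GIS G} :
    r ∈ loopReps a ha m d hd ↔
      ∃ j ∈ Set.Ico 1 m, ∃ w ∈ loopTails a, r = ofPaths (loopThen a ha j d hd) w := by
  constructor
  · rintro ⟨⟨j, w⟩, ⟨hj, hw⟩, rfl⟩
    exact ⟨j, hj, w, hw, rfl⟩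
  · rintro ⟨j, hj, w, hw, rfl⟩
    exact ⟨(j, w), ⟨hj, hw⟩, rfl⟩

theorem mem_pathReps {r : GIS G} :
    r ∈ pathReps a d ↔
      ∃ n ≤ d.edges.length, ∃ w ∈ pathTails a d (d.vertexAt n), r = ofPaths (d.drop n) w := by
  simp only [pathReps, Set.mem_iUnion₂, Set.mem_image, Set.mem_Iic, exists_prop, eq_comm]

theorem exists_pathRep_eq (hm : 1 ≤ m) (hdn : d.vertexList.Nodup)
    (hnc : NoOtherCircuitsFrom a d) {w₀ : G.DPath} (hw₀ : w₀.first = G.src a)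
    (hhead : ∀ e, w₀.edges.head? = some e → e ≠ a) :
    ∃ r ∈ pathReps a d, upCoset (cycleSet G (G.loopPow a ha m) d)
      (pair (loopThen a ha 0 d hd) w₀ hw₀.symm) = upCoset (cycleSet G (G.loopPow a ha m) d) r := by
  obtain ⟨n, hn, r, hr, hmax⟩ := List.exists_maximal_take_prefix d.edges w₀.edges
  have hwalk := w₀.wf
  rw [hr, G.isWalk_append, hw₀, ← hd] at hwalk
  set w₁ : G.DPath := ⟨d.vertexAt n, r, hwalk.2⟩
  have haw₀ : a ∉ w₀.edges :=
    hnc.notMem_of_head_ne (hd ▸ d.first_mem_vertexList) (hw₀ ▸ w₀.wf) hhead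
  have hhead₁ : ∀ e, r.head? = some e → e ∉ d.edges := by
    intro e he hmem
    obtain ⟨j, hj, rfl⟩ := List.getElem_of_mem hmem
    obtain ⟨t, rfl⟩ := List.head?_eq_some_iff.mp he
    have hjn : j = n :=
      DPath.vertexAt_injOn hdn hj.le hn ((d.wf.src_getElem hj).symm.trans hwalk.2.1)
    subst hjn
    exact hmax hj he
  refine ⟨ofPaths (d.drop n) w₁, mem_pathReps.mpr ⟨n, hn, w₁,
    ⟨fun ha => haw₀ (hr ▸ List.mem_append_right _ ha), rfl, hhead₁⟩, rfl⟩, ?_⟩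
  rw [ofPaths_eq (u := d.drop n) (w := w₁) rfl, upCoset_drop_eq hd hm n (w := w₁) rfl]
  exact congrArg _ (pair_eq_pair.mpr ⟨rfl, DPath.ext (hw₀.trans hd.symm) hr⟩)

theorem exists_rep_eq_of_loopThen (hm : 1 ≤ m) (hdn : d.vertexList.Nodup)
    (hnc : NoOtherCircuitsFrom a d) (i : ℕ) {w : G.DPath}
    (h : (loopThen a ha i d hd).first = w.first) :
    ∃ r ∈ loopReps a ha m d hd ∪ pathReps a d, upCoset (cycleSet G (G.loopPow a ha m) d)
      (pair (loopThen a ha i d hd) w h) = upCoset (cycleSet G (G.loopPow a ha m) d) r := by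
  obtain ⟨k, w₀, hw₀, hhead, rfl⟩ := exists_eq_loopThen ha h.symm
  obtain ⟨j, hjm, hj⟩ : ∃ j < m, i + 0 ≡ j + k [MOD m] := by
    refine ⟨(i + k * (m - 1)) % m, Nat.mod_lt _ hm, ?_⟩
    calc i + 0 ≡ i + k * m [MOD m] := by simp [Nat.ModEq]
      _ = i + k * (m - 1) + k := by
        rw [add_assoc, ← Nat.mul_succ, Nat.succ_eq_add_one, Nat.sub_add_cancel hm]
      _ ≡ (i + k * (m - 1)) % m + k [MOD m] := (Nat.mod_modEq _ m).symm.add_right k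
  have hcos : upCoset (cycleSet G (G.loopPow a ha m) d) (pair (loopThen a ha i d hd)
      (loopThen a ha k w₀ hw₀) h) =
        upCoset (cycleSet G (G.loopPow a ha m) d) (pair (loopThen a ha j d hd) w₀ hw₀.symm) :=
    (upCoset_loopThen_eq hd hm hw₀ hj).trans
      (congrArg _ (pair_eq_pair.mpr ⟨rfl, loopThen_zero w₀ hw₀⟩))
  rcases Nat.eq_zero_or_pos j with rfl | hj1
  · obtain ⟨r, hr, hC⟩ := exists_pathRep_eq hd hm hdn hnc hw₀ hhead
    exact ⟨r, Or.inr hr, hcos.trans hC⟩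
  · refine ⟨ofPaths (loopThen a ha j d hd) w₀,
      Or.inl ((mem_loopReps hd).mpr ⟨j, ⟨hj1, hjm⟩, w₀, ⟨hw₀, hhead⟩, rfl⟩), ?_⟩
    rw [hcos, ofPaths_eq]

theorem exists_rep_eq (hm : 1 ≤ m) (hdn : d.vertexList.Nodup) (hnc : NoOtherCircuitsFrom a d)
    {t : GIS G} (ht : t * t.inv ∈ cycleSet G (G.loopPow a ha m) d) :
    ∃ r ∈ loopReps a ha m d hd ∪ pathReps a d, upCoset (cycleSet G (G.loopPow a ha m) d) t =
      upCoset (cycleSet G (G.loopPow a ha m) d) r := by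
  rcases t with _ | ⟨u, w, h⟩
  · rcases (mem_cycleSet_loopPow_iff hd hm).mp ht with ⟨_, _, _, h0⟩ | ⟨_, _, h0⟩ <;> cases h0
  rw [pair_mul_inv] at ht
  rcases (mem_cycleSet_loopPow_iff hd hm).mp ht with ⟨i, i', -, hu⟩ | ⟨n, -, hu⟩
  · obtain ⟨rfl, -⟩ := pair_eq_pair.mp hu
    exact exists_rep_eq_of_loopThen hd hm hdn hnc i h
  · obtain ⟨rfl, -⟩ := pair_eq_pair.mp hu
    rw [upCoset_drop_eq hd hm n h]
    exact exists_rep_eq_of_loopThen hd hm hdn hnc 0 _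

theorem loopRep_eq_of_mul_le (hm : 1 ≤ m) {j j' : ℕ} (hj : j < m) (hj' : j' < m)
    {w₀ w₀' : G.DPath} {h : (loopThen a ha j d hd).first = w₀.first}
    {h' : (loopThen a ha j' d hd).first = w₀'.first}
    (hh₀ : ∀ e, w₀.edges.head? = some e → e ≠ a) (hh₀' : ∀ e, w₀'.edges.head? = some e → e ≠ a)
    {x : GIS G} (hx : x ∈ cycleSet G (G.loopPow a ha m) d)
    (hle : le (x * pair (loopThen a ha j d hd) w₀ h) (pair (loopThen a ha j' d hd) w₀' h')) :
    j = j' ∧ w₀ = w₀' := by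
  obtain ⟨I, C, hIC, hx⟩ := exists_mul_loopThen_eq hd hm hx j h
  rw [hx, pair_le_pair_iff] at hle
  obtain ⟨z, hz₁, hz₂, -⟩ := hle
  have hz : z ++ List.replicate j' a = List.replicate I a :=
    List.append_cancel_right (by simpa using hz₁.symm)
  obtain ⟨rfl, hz, -⟩ := List.append_eq_replicate_iff.mp hz
  rw [hz] at hz₂
  obtain ⟨rfl, hw⟩ := List.replicate_append_inj_of_head_ne hz₂ hh₀ hh₀'
  rw [List.length_replicate] at hIC
  exact ⟨(hIC.add_left_cancel' _).symm.eq_of_lt_of_lt hj hj', DPath.ext (h.symm.trans h') hw⟩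

theorem not_mul_loopRep_le_pathRep (hm : 1 ≤ m) (had : a ∉ d.edges) {j : ℕ} (hj1 : 1 ≤ j)
    (hj : j < m) {n : ℕ} {w₀ w₁ : G.DPath} {h : (loopThen a ha j d hd).first = w₀.first}
    {h' : (d.drop n).first = w₁.first} (hh₀ : ∀ e, w₀.edges.head? = some e → e ≠ a)
    (ha₁ : a ∉ w₁.edges) {x : GIS G} (hx : x ∈ cycleSet G (G.loopPow a ha m) d) :
    ¬ le (x * pair (loopThen a ha j d hd) w₀ h) (pair (d.drop n) w₁ h') := by
  intro hle
  obtain ⟨I, C, hIC, hx⟩ := exists_mul_loopThen_eq hd hm hx j h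
  rw [hx, pair_le_pair_iff] at hle
  obtain ⟨z, hz₁, hz₂, -⟩ := hle
  have hz : z = List.replicate I a ++ d.edges.take n := List.append_cancel_right
    (hz₁.symm.trans (by rw [List.append_assoc, List.take_append_drop]))
  rw [hz, List.append_assoc] at hz₂
  obtain ⟨rfl, -⟩ := List.replicate_append_inj_of_head_ne hz₂ hh₀
    (List.forall_head?_ne_of_notMem
      (List.not_mem_append (fun h => had (List.mem_of_mem_take h)) ha₁))
  have h0 : 0 ≡ j [MOD m] := Nat.ModEq.add_left_cancel' C hIC
  rw [Nat.ModEq, Nat.zero_mod, Nat.mod_eq_of_lt hj] at h0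
  omega

theorem pathRep_eq_of_mul_le (hd : d.first = G.src a) (hm : 1 ≤ m) (had : a ∉ d.edges) {n n' : ℕ}
    (hn : n ≤ d.edges.length) (hn' : n' ≤ d.edges.length) {w₁ w₁' : G.DPath}
    {h : (d.drop n).first = w₁.first} {h' : (d.drop n').first = w₁'.first}
    (ha₁ : a ∉ w₁.edges) (hh₁ : ∀ e, w₁.edges.head? = some e → e ∉ d.edges)
    (ha₁' : a ∉ w₁'.edges) (hh₁' : ∀ e, w₁'.edges.head? = some e → e ∉ d.edges)
    {x : GIS G} (hx : x ∈ cycleSet G (G.loopPow a ha m) d)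
    (hle : le (x * pair (d.drop n) w₁ h) (pair (d.drop n') w₁' h')) :
    n = n' ∧ w₁ = w₁' := by
  suffices hnw : n = n' ∧ w₁.edges = w₁'.edges by
    obtain ⟨rfl, hw⟩ := hnw
    exact ⟨rfl, DPath.ext (h.symm.trans h') hw⟩
  -- products `(d_p, d_p) * (d_n, w₁)` with `p ≤ n` are `(d_p, (d_p).take (n - p) ++ w₁)`
  have key : ∀ p ≤ n, ∀ z, d.edges.drop p = z ++ d.edges.drop n' →
      (d.edges.drop p).take (n - p) ++ w₁.edges = z ++ w₁'.edges →
        n = n' ∧ w₁.edges = w₁'.edges := by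
    intro p hp z hz₁ hz₂
    have hlen := congrArg List.length hz₁
    simp only [List.length_drop, List.length_append] at hlen
    have hpn' : p ≤ n' := by omega
    have hsplit : d.edges.drop p = (d.edges.drop p).take (n' - p) ++ d.edges.drop n' :=
      (List.take_append_drop (n' - p) _).symm.trans
        (by rw [List.drop_drop, Nat.add_sub_cancel' hpn'])
    rw [List.append_cancel_right (hz₁.symm.trans hsplit)] at hz₂
    have hdrop : ∀ {t : List G.E}, (∀ e, t.head? = some e → e ∉ d.edges) →
        ∀ e, t.head? = some e → e ∉ d.edges.drop p :=
      fun ht e he hmem => ht e he (List.mem_of_mem_drop hmem)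
    obtain ⟨hnn, hw⟩ := List.take_append_inj_of_head_notMem (by simp; omega) (by simp; omega) hz₂
      (hdrop hh₁) (hdrop hh₁')
    exact ⟨by omega, hw⟩
  rcases (mem_cycleSet_loopPow_iff hd hm).mp hx with ⟨i₁, i₂, -, rfl⟩ | ⟨n₀, -, rfl⟩
  · rw [loopPair_mul_drop, pair_le_pair_iff] at hle
    obtain ⟨z, hz₁, hz₂, -⟩ := hle
    have hz : z = List.replicate i₁ a ++ d.edges.take n' := List.append_cancel_right
      (hz₁.symm.trans (by rw [List.append_assoc, List.take_append_drop]))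
    rw [hz, List.append_assoc] at hz₂
    have hnotMem : ∀ {k} {t : List G.E}, a ∉ t → a ∉ d.edges.take k ++ t :=
      fun ht => List.not_mem_append (fun h => had (List.mem_of_mem_take h)) ht
    obtain ⟨-, htk⟩ := List.replicate_append_inj_of_head_ne hz₂
      (List.forall_head?_ne_of_notMem (hnotMem ha₁)) (List.forall_head?_ne_of_notMem (hnotMem ha₁'))
    exact List.take_append_inj_of_head_notMem hn hn' htk hh₁ hh₁'
  · rcases le_total n₀ n with hn₀ | hn₀
    · obtain ⟨k, rfl⟩ := Nat.exists_eq_add_of_le hn₀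
      rw [dropPair_mul_drop_add, pair_le_pair_iff] at hle
      obtain ⟨z, hz₁, hz₂, -⟩ := hle
      exact key n₀ hn₀ z hz₁ (by simpa using hz₂)
    · obtain ⟨k, rfl⟩ := Nat.exists_eq_add_of_le hn₀
      rw [pair_self_mul (d.drop_add_isSuffixOf_drop n k), pair_le_pair_iff] at hle
      obtain ⟨z, hz₁, hz₂, -⟩ := hle
      exact key n le_rfl z hz₁ (by simpa using hz₂)

theorem exists_pair_of_mem_reps (hm : 1 ≤ m) {r : GIS G}
    (hr : r ∈ loopReps a ha m d hd ∪ pathReps a d) :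
    ∃ u w h, r = pair u w h ∧ pair u u rfl ∈ cycleSet G (G.loopPow a ha m) d := by
  rcases hr with hr | hr
  · obtain ⟨j, -, w₀, ⟨hw₀, -⟩, rfl⟩ := (mem_loopReps hd).mp hr
    exact ⟨_, _, hw₀.symm, ofPaths_eq _, loopPair_mem hd hm j⟩
  · obtain ⟨n, -, w, ⟨-, hw, -⟩, rfl⟩ := mem_pathReps.mp hr
    exact ⟨_, _, hw.symm, ofPaths_eq _, dropPair_mem n⟩

theorem upCoset_injOn (hm : 1 ≤ m) (had : a ∉ d.edges) :
    Set.InjOn (upCoset (cycleSet G (G.loopPow a ha m) d))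
      (loopReps a ha m d hd ∪ pathReps a d) := by
  have hself : ∀ r ∈ loopReps a ha m d hd ∪ pathReps a d,
      r ∈ upCoset (cycleSet G (G.loopPow a ha m) d) r := fun r hr => by
    obtain ⟨u, w, h, rfl, hu⟩ := exists_pair_of_mem_reps hd hm hr
    exact mem_upCoset_self h hu
  intro r hr r' hr' hC
  obtain ⟨x, hx, hle⟩ : r' ∈ upCoset _ r := by rw [hC]; exact hself r' hr'
  obtain ⟨x', hx', hle'⟩ : r ∈ upCoset _ r' := by rw [← hC]; exact hself r hr
  rcases hr with hr | hr <;> rcases hr' with hr' | hr'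
  · obtain ⟨j, ⟨-, hj⟩, w₀, ⟨hw₀, hh₀⟩, rfl⟩ := (mem_loopReps hd).mp hr
    obtain ⟨j', ⟨-, hj'⟩, w₀', ⟨hw₀', hh₀'⟩, rfl⟩ := (mem_loopReps hd).mp hr'
    rw [ofPaths_eq hw₀.symm, ofPaths_eq hw₀'.symm] at hle ⊢
    obtain ⟨rfl, rfl⟩ := loopRep_eq_of_mul_le hd hm hj hj' hh₀ hh₀' hx hle
    rfl
  · obtain ⟨j, ⟨hj1, hj⟩, w₀, ⟨hw₀, hh₀⟩, rfl⟩ := (mem_loopReps hd).mp hr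
    obtain ⟨n', -, w₁', ⟨ha₁', hw₁', -⟩, rfl⟩ := mem_pathReps.mp hr'
    rw [ofPaths_eq hw₀.symm, ofPaths_eq hw₁'.symm] at hle
    exact (not_mul_loopRep_le_pathRep hd hm had hj1 hj hh₀ ha₁' hx hle).elim
  · obtain ⟨j', ⟨hj1', hj'⟩, w₀', ⟨hw₀', hh₀'⟩, rfl⟩ := (mem_loopReps hd).mp hr'
    obtain ⟨n, -, w₁, ⟨ha₁, hw₁, -⟩, rfl⟩ := mem_pathReps.mp hr
    rw [ofPaths_eq hw₀'.symm, ofPaths_eq hw₁.symm] at hle'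
    exact (not_mul_loopRep_le_pathRep hd hm had hj1' hj' hh₀' ha₁ hx' hle').elim
  · obtain ⟨n, hn, w₁, ⟨ha₁, hw₁, hh₁⟩, rfl⟩ := mem_pathReps.mp hr
    obtain ⟨n', hn', w₁', ⟨ha₁', hw₁', hh₁'⟩, rfl⟩ := mem_pathReps.mp hr'
    rw [ofPaths_eq hw₁.symm, ofPaths_eq hw₁'.symm] at hle ⊢
    obtain ⟨rfl, rfl⟩ := pathRep_eq_of_mul_le hd hm had hn hn' ha₁ hh₁ ha₁' hh₁' hx hle
    rfl

theorem cosets_eq_image (hm : 1 ≤ m) (hdn : d.vertexList.Nodup) (hnc : NoOtherCircuitsFrom a d) :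
    cosets G (cycleSet G (G.loopPow a ha m) d) =
      upCoset (cycleSet G (G.loopPow a ha m) d) '' (loopReps a ha m d hd ∪ pathReps a d) := by
  ext C
  constructor
  · rintro ⟨t, ht, rfl⟩
    obtain ⟨r, hr, hC⟩ := exists_rep_eq hd hm hdn hnc ht
    exact ⟨r, hr, hC.symm⟩
  · rintro ⟨r, hr, rfl⟩
    obtain ⟨u, w, h, rfl, hu⟩ := exists_pair_of_mem_reps hd hm hr
    exact ⟨_, by rwa [pair_mul_inv], rfl⟩

theorem disjoint_loopReps_pathReps : Disjoint (loopReps a ha m d hd) (pathReps a d) := by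
  refine Set.disjoint_left.mpr fun r hr hr' => ?_
  obtain ⟨j, ⟨hj1, -⟩, w₀, ⟨hw₀, -⟩, rfl⟩ := (mem_loopReps hd).mp hr
  obtain ⟨n, -, w₁, ⟨-, hw₁, -⟩, he⟩ := mem_pathReps.mp hr'
  rw [ofPaths_eq hw₀.symm, ofPaths_eq hw₁.symm, pair_eq_pair] at he
  have hlen := congrArg (·.edges.length) he.1
  simp only [List.length_append, List.length_replicate, List.length_drop] at hlen
  omega

theorem ncard_loopReps : (loopReps a ha m d hd).ncard = (m - 1) * (loopTails a).ncard := by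
  rw [loopReps, Set.InjOn.ncard_image, Set.ncard_prod, Set.ncard_Ico_nat]
  rintro ⟨j, w⟩ ⟨-, hw, -⟩ ⟨j', w'⟩ ⟨-, hw', -⟩ he
  dsimp only at hw hw' he
  rw [ofPaths_eq hw.symm, ofPaths_eq hw'.symm, pair_eq_pair] at he
  obtain ⟨hP, rfl⟩ := he
  have hlen := congrArg (·.edges.length) hP
  simp only [List.length_append, List.length_replicate] at hlen
  exact Prod.ext (by omega) rfl

theorem ncard_pathReps [DecidableEq G.V] (hdn : d.vertexList.Nodup)
    (hfin : ∀ v ∈ d.vertexList, (pathTails a d v).Finite) :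
    (pathReps a d).ncard = ∑ v ∈ d.vertexList.toFinset, (pathTails a d v).ncard := by
  have hv : ∀ n ≤ d.edges.length, d.vertexAt n ∈ d.vertexList :=
    fun n hn => DPath.mem_vertexList_iff.mpr ⟨n, hn, rfl⟩
  have hinj : ∀ n, Set.InjOn (ofPaths (d.drop n)) (pathTails a d (d.vertexAt n)) := by
    rintro n w ⟨-, hw, -⟩ w' ⟨-, hw', -⟩ he
    rw [ofPaths_eq hw.symm, ofPaths_eq hw'.symm, pair_eq_pair] at he
    exact he.2
  have hdisj : (Set.Iic d.edges.length).PairwiseDisjoint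
      fun n => ofPaths (d.drop n) '' pathTails a d (d.vertexAt n) := by
    intro n hn n' hn' hne
    refine Set.disjoint_left.mpr ?_
    rintro _ ⟨w, ⟨-, hw, -⟩, rfl⟩ ⟨w', ⟨-, hw', -⟩, he⟩
    rw [ofPaths_eq (u := d.drop n) hw.symm, ofPaths_eq (u := d.drop n') hw'.symm,
      pair_eq_pair] at he
    have hlen := congrArg (·.edges.length) he.1
    simp only [List.length_drop] at hlen
    exact hne (by simp only [Set.mem_Iic] at hn hn'; omega)
  have himage : d.vertexList.toFinset = (Finset.Iic d.edges.length).image d.vertexAt := by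
    ext v
    simp [DPath.mem_vertexList_iff]
  rw [pathReps, (Set.finite_Iic _).ncard_biUnion (fun n hn => (hfin _ (hv n hn)).image _) hdisj,
    ← Finset.coe_Iic, finsum_mem_coe_finset, himage, Finset.sum_image]
  · exact Finset.sum_congr rfl fun n _ => (hinj n).ncard_image
  · exact fun n hn n' hn' => DPath.vertexAt_injOn hdn (by simpa using hn) (by simpa using hn')

section Finite

variable [Fintype G.V] [Finite G.E]

theorem pathTails_finite (hnc : NoOtherCircuitsFrom a d) {v : G.V} (hv : v ∈ d.vertexList) :
    (pathTails a d v).Finite :=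
  finite_setOf_nodup_vertexList.subset fun _ ⟨ha, hw, _⟩ => hnc.nodup_vertexList (hw ▸ hv) ha

theorem loopReps_finite (hnc : NoOtherCircuitsFrom a d) : (loopReps a ha m d hd).Finite := by
  have hb : G.src a ∈ d.vertexList := hd ▸ d.first_mem_vertexList
  refine ((Set.finite_Ico 1 m).prod (finite_setOf_nodup_vertexList.subset ?_)).image _
  exact fun w ⟨hw, hhead⟩ =>
    hnc.nodup_vertexList (hw ▸ hb) (hnc.notMem_of_head_ne hb (hw ▸ w.wf) hhead)

theorem pathReps_finite (hnc : NoOtherCircuitsFrom a d) : (pathReps a d).Finite :=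
  (Set.finite_Iic _).biUnion fun n hn =>
    (pathTails_finite hnc (DPath.mem_vertexList_iff.mpr ⟨n, hn, rfl⟩)).image _

end Finite

end LoopCycle

open DGraph LoopCycle

/-- for a loop `a`, if apart from powers of `a` there is no directed
circuit accessible from a vertex of `d`, then `L_{a^m,d}` has finite index, equal to
`(m-1) · N^Γ_{b,a} + Σ_{v ∈ V(d)} N^{Γ∖{a}}_{v,d}`. -/
theorem stmt_19 (G : DGraph) [Fintype G.V] [Fintype G.E] [DecidableEq G.V]
    (a : G.E) (ha : G.tgt a = G.src a) (m : ℕ) (hm : 1 ≤ m)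
    (d : G.DPath) (hd : d.first = G.src a)
    (hpre : G.NoCommonPrefix (G.loopPow a ha m) d)
    (honly : ∀ c : G.DPath, G.IsCircuit c →
      (∃ g : G.DPath, g.first ∈ d.vertexList ∧ g.last ∈ c.vertexList) →
      ∀ e ∈ c.edges, e = a) :
    (cosets G (cycleSet G (G.loopPow a ha m) d)).Finite ∧
    (cosets G (cycleSet G (G.loopPow a ha m) d)).ncard =
      (m - 1) * {t : G.DPath | t.first = G.src a ∧
                  ∀ e, t.edges.head? = some e → e ≠ a}.ncard +
        ∑ v ∈ d.vertexList.toFinset,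
          {t : G.DPath | a ∉ t.edges ∧ t.first = v ∧
            ∀ e, t.edges.head? = some e → e ∉ d.edges}.ncard := by
  have hnc : NoOtherCircuitsFrom a d := honly
  have had : a ∉ d.edges := hnc.notMem_of_head_ne (hd ▸ d.first_mem_vertexList) (hd ▸ d.wf)
    (head_ne_of_noCommonPrefix hm hpre)
  have hdn : d.vertexList.Nodup := hnc.nodup_vertexList d.first_mem_vertexList had
  have hfin₁ := loopReps_finite (ha := ha) (m := m) hd hnc
  have hfin₂ := pathReps_finite hnc
  rw [cosets_eq_image hd hm hdn hnc]
  refine ⟨(hfin₁.union hfin₂).image _, ?_⟩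
  rw [(upCoset_injOn hd hm had).ncard_image,
    Set.ncard_union_eq (disjoint_loopReps_pathReps hd) hfin₁ hfin₂, ncard_loopReps hd,
    ncard_pathReps hdn fun v hv => pathTails_finite hnc hv]
  rfl
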